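/- For each n and 1 ≤ i ≤ n let W_{n,i} := s_n^{−2} Z_i² 1{Z_i² ≤ s_n²}. Then, as n → ∞, Σ_{i=1}^n (W_{n,i} − E W_{n,i}) converges to 0 in probability; that is, for every ε > 0, P( | Σ_{i=1}^n (W_{n,i} − E W_{n,i}) | ≥ ε ) → 0. -/

import Mathlib

open MeasureTheory ProbabilityTheory Filter
open scoped Classical

/-- The truncated, normalized square `W_{n,i} = s_n^{-2} Z_i² 1{Z_i² ≤ s_n²}`. -/
noncomputable def Wtrunc {Ω : Type*} (Z : ℕ → Ω → ℝ) (σ2 : ℕ → ℝ) (n i : ℕ) (ω : Ω) : ℝ :=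
  if (Z i ω) ^ 2 ≤ ∑ j ∈ Finset.range n, σ2 j then
    (Z i ω) ^ 2 / ∑ j ∈ Finset.range n, σ2 j else 0

/-!
By independence, the variance of `S_n = ∑_{i<n} W_{n,i}` is the sum of the variances, each at most
`E W_{n,i}²`. Fix `δ > 0`. Where `|Z_i| < δ s_n` we have `W_{n,i} ≤ δ²`, hence
`W_{n,i}² ≤ δ² Z_i² / s_n²`; elsewhere `W_{n,i}² ≤ W_{n,i} ≤ Z_i² / s_n²`. Summing,
`Var S_n ≤ δ² + L_n(δ)` with `L_n(δ)` the Lindeberg sum, so `Var S_n → 0`, and Chebyshev's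
inequality gives the convergence in probability.
-/

open Topology

/-- `Wtrunc Z σ2 n i` is definitionally `truncSq s_n² ∘ Z i`. -/
noncomputable def truncSq (V x : ℝ) : ℝ := if x ^ 2 ≤ V then x ^ 2 / V else 0

lemma measurable_truncSq (V : ℝ) : Measurable (truncSq V) :=
  Measurable.ite (measurableSet_le (measurable_id.pow_const 2) measurable_const)
    ((measurable_id.pow_const 2).div_const _) measurable_const

lemma truncSq_nonneg (V x : ℝ) : 0 ≤ truncSq V x := by
  unfold truncSq
  split_ifs with h
  · exact div_nonneg (sq_nonneg x) ((sq_nonneg x).trans h)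
  · rfl

lemma truncSq_le_one (V x : ℝ) : truncSq V x ≤ 1 := by
  unfold truncSq
  split_ifs with h
  · exact div_le_one_of_le₀ h ((sq_nonneg x).trans h)
  · exact zero_le_one

lemma sq_truncSq_le {V : ℝ} (hV : 0 ≤ V) (δ x : ℝ) :
    truncSq V x ^ 2 ≤ δ ^ 2 * x ^ 2 / V + if δ * √V ≤ |x| then x ^ 2 / V else 0 := by
  have hxV : 0 ≤ x ^ 2 / V := by positivity
  by_cases hx : x ^ 2 ≤ V
  swap
  · rw [truncSq, if_neg hx, zero_pow two_ne_zero]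
    split_ifs <;> positivity
  have ht : truncSq V x = x ^ 2 / V := if_pos hx
  rw [ht]
  split_ifs with hlarge
  · calc (x ^ 2 / V) ^ 2 ≤ x ^ 2 / V :=
        pow_le_of_le_one hxV (ht ▸ truncSq_le_one V x) two_ne_zero
      _ ≤ δ ^ 2 * x ^ 2 / V + x ^ 2 / V := le_add_of_nonneg_left (by positivity)
  · have hsq : x ^ 2 ≤ δ ^ 2 * V := by
      calc x ^ 2 = |x| ^ 2 := (sq_abs x).symm
        _ ≤ (δ * √V) ^ 2 := pow_le_pow_left₀ (abs_nonneg x) (not_le.1 hlarge).le 2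
        _ = δ ^ 2 * V := by rw [mul_pow, Real.sq_sqrt hV]
    have hsmall : x ^ 2 / V ≤ δ ^ 2 := div_le_of_le_mul₀ hV (sq_nonneg δ) hsq
    calc (x ^ 2 / V) ^ 2 = x ^ 2 / V * (x ^ 2 / V) := sq _
      _ ≤ δ ^ 2 * (x ^ 2 / V) := mul_le_mul_of_nonneg_right hsmall hxV
      _ = δ ^ 2 * x ^ 2 / V + 0 := by ring

section

variable {Ω : Type*} [MeasurableSpace Ω] {μ : Measure Ω}

lemma memLp_truncSq_comp [IsFiniteMeasure μ] {X : Ω → ℝ} (hX : AEMeasurable X μ) (V : ℝ)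
    (p : ENNReal) : MemLp (truncSq V ∘ X) p μ :=
  MemLp.of_bound ((measurable_truncSq V).comp_aemeasurable hX).aestronglyMeasurable 1 <|
    ae_of_all _ fun ω => by
      rw [Function.comp_apply, Real.norm_eq_abs, abs_of_nonneg (truncSq_nonneg V _)]
      exact truncSq_le_one V _

lemma variance_truncSq_comp_le [IsProbabilityMeasure μ] {X : Ω → ℝ} (hX : MemLp X 2 μ)
    {V : ℝ} (hV : 0 ≤ V) (δ : ℝ) :
    variance (truncSq V ∘ X) μ ≤
      δ ^ 2 * (∫ ω, X ω ^ 2 ∂μ) / V + (∫ ω in {ω | δ * √V ≤ |X ω|}, X ω ^ 2 ∂μ) / V := by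
  set A := {ω | δ * √V ≤ |X ω|}
  have hA : NullMeasurableSet A μ := nullMeasurableSet_le aemeasurable_const hX.aemeasurable.abs
  have hX2 : Integrable (fun ω => X ω ^ 2) μ := hX.integrable_sq
  have hmain : Integrable (fun ω => δ ^ 2 * X ω ^ 2 / V) μ := (hX2.const_mul _).div_const _
  have htail : Integrable (A.indicator fun ω => X ω ^ 2 / V) μ := (hX2.div_const _).indicator₀ hA
  have hbound : ∀ ω, (truncSq V ∘ X) ω ^ 2 ≤
      δ ^ 2 * X ω ^ 2 / V + A.indicator (fun ω => X ω ^ 2 / V) ω := fun ω => by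
    simpa only [Function.comp_apply, A, Set.indicator_apply, Set.mem_ofPred_eq] using
      sq_truncSq_le hV δ (X ω)
  calc variance (truncSq V ∘ X) μ ≤ ∫ ω, (truncSq V ∘ X) ω ^ 2 ∂μ :=
        variance_le_expectation_sq (memLp_truncSq_comp hX.aemeasurable V 2).aestronglyMeasurable
    _ ≤ ∫ ω, (δ ^ 2 * X ω ^ 2 / V + A.indicator (fun ω => X ω ^ 2 / V) ω) ∂μ :=
        integral_mono (memLp_truncSq_comp hX.aemeasurable V 2).integrable_sq (hmain.add htail)
          hbound
    _ = _ := by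
        rw [integral_add hmain htail, integral_indicator₀ hA, integral_div, integral_div,
          integral_const_mul]

lemma variance_sum_truncSq_comp_le [IsProbabilityMeasure μ] {ι : Type*} {X : ι → Ω → ℝ}
    (hindep : iIndepFun X μ) (hX : ∀ i, MemLp (X i) 2 μ) (s : Finset ι) {V : ℝ} (hV : 0 ≤ V)
    (δ : ℝ) :
    variance (∑ i ∈ s, truncSq V ∘ X i) μ ≤
      δ ^ 2 * (∑ i ∈ s, ∫ ω, X i ω ^ 2 ∂μ) / V +
        V⁻¹ * ∑ i ∈ s, ∫ ω in {ω | δ * √V ≤ |X i ω|}, X i ω ^ 2 ∂μ := by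
  have hindep' := hindep.comp (fun _ => truncSq V) fun _ => measurable_truncSq V
  rw [IndepFun.variance_sum (fun i _ => memLp_truncSq_comp (hX i).aemeasurable V 2)
    fun i _ j _ hij => hindep'.indepFun hij]
  calc ∑ i ∈ s, variance (truncSq V ∘ X i) μ
      ≤ ∑ i ∈ s, (δ ^ 2 * (∫ ω, X i ω ^ 2 ∂μ) / V +
          (∫ ω in {ω | δ * √V ≤ |X i ω|}, X i ω ^ 2 ∂μ) / V) :=
        Finset.sum_le_sum fun i _ => variance_truncSq_comp_le (hX i) hV δ
    _ = _ := by
        rw [Finset.sum_add_distrib, ← Finset.sum_div, ← Finset.sum_div, ← Finset.mul_sum,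
          div_eq_inv_mul (∑ i ∈ s, _)]

lemma tendsto_measure_abs_sub_integral_ge_of_tendsto_variance [IsFiniteMeasure μ] {α : Type*}
    {l : Filter α} {Y : α → Ω → ℝ} (hY : ∀ n, MemLp (Y n) 2 μ)
    (hvar : Tendsto (fun n => variance (Y n) μ) l (𝓝 0)) {ε : ℝ} (hε : 0 < ε) :
    Tendsto (fun n => μ {ω | ε ≤ |Y n ω - μ[Y n]|}) l (𝓝 0) := by
  have hbound : Tendsto (fun n => ENNReal.ofReal (variance (Y n) μ / ε ^ 2)) l (𝓝 0) := by
    simpa using ENNReal.tendsto_ofReal (hvar.div_const (ε ^ 2))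
  exact tendsto_of_tendsto_of_tendsto_of_le_of_le tendsto_const_nhds hbound (fun _ => bot_le)
    fun n => meas_ge_le_variance_div_sq (hY n) hε

end

lemma tendsto_zero_of_forall_le_add {α : Type*} {l : Filter α} {v : α → ℝ} (hv : ∀ n, 0 ≤ v n)
    (h : ∀ η > 0, ∃ L : α → ℝ, Tendsto L l (𝓝 0) ∧ ∀ n, v n ≤ η + L n) :
    Tendsto v l (𝓝 0) := by
  refine tendsto_order.2 ⟨fun a ha => Eventually.of_forall fun n => ha.trans_le (hv n),
    fun a ha => ?_⟩
  obtain ⟨L, hL, hvL⟩ := h (a / 2) (half_pos ha)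
  filter_upwards [hL.eventually (gt_mem_nhds (half_pos ha))] with n hn
  linarith [hvL n]

theorem truncated_centered_sum_negligible_general
    {Ω : Type*} [MeasurableSpace Ω] (P : Measure Ω) [IsProbabilityMeasure P]
    (Z : ℕ → Ω → ℝ) (σ2 : ℕ → ℝ)
    (hindep : iIndepFun Z P)
    (hL2 : ∀ i, MemLp (Z i) 2 P)
    (hvar : ∀ i, ∫ ω, (Z i ω) ^ 2 ∂P = σ2 i)
    (hLind : ∀ ε > (0 : ℝ), Tendsto (fun n =>
      (∑ i ∈ Finset.range n, σ2 i)⁻¹ *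
        ∑ i ∈ Finset.range n,
          ∫ ω in {ω | ε * Real.sqrt (∑ j ∈ Finset.range n, σ2 j) ≤ |Z i ω|}, (Z i ω) ^ 2 ∂P)
      atTop (nhds 0)) :
    ∀ ε > (0 : ℝ), Tendsto (fun n =>
      P {ω | ε ≤ |∑ i ∈ Finset.range n, (Wtrunc Z σ2 n i ω - ∫ ω', Wtrunc Z σ2 n i ω' ∂P)|})
      atTop (nhds 0) := by
  intro ε hε
  set S : ℕ → Ω → ℝ := fun n => ∑ i ∈ Finset.range n, Wtrunc Z σ2 n i
  have hW : ∀ n i, MemLp (Wtrunc Z σ2 n i) 2 P := fun n i =>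
    memLp_truncSq_comp (hL2 i).aemeasurable _ 2
  have hS : ∀ n, MemLp (S n) 2 P := fun n => memLp_finsetSum' _ fun i _ => hW n i
  have hvarS : Tendsto (fun n => variance (S n) P) atTop (𝓝 0) := by
    refine tendsto_zero_of_forall_le_add (fun n => variance_nonneg _ _) fun η hη =>
      ⟨_, hLind √η (Real.sqrt_pos.2 hη), fun n => ?_⟩
    have hV : 0 ≤ ∑ j ∈ Finset.range n, σ2 j :=
      Finset.sum_nonneg fun i _ => hvar i ▸ integral_nonneg fun ω => sq_nonneg (Z i ω)
    refine (variance_sum_truncSq_comp_le hindep hL2 (Finset.range n) hV √η).trans ?_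
    simp_rw [hvar, Real.sq_sqrt hη.le, mul_div_assoc]
    gcongr
    exact mul_le_of_le_one_right hη.le (div_self_le_one _)
  refine (tendsto_measure_abs_sub_integral_ge_of_tendsto_variance hS hvarS hε).congr fun n => ?_
  congr with ω
  simp only [S, Finset.sum_apply]
  rw [integral_finsetSum _ fun i _ => (hW n i).integrable one_le_two, ← Finset.sum_sub_distrib]

/-- Under Lindeberg's condition, `∑_{i=1}^n (W_{n,i} - E W_{n,i})` converges to 0 in
probability, where `W_{n,i} = s_n⁻² Z_i² 1{Z_i² ≤ s_n²}`. -/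
theorem truncated_centered_sum_negligible
    {Ω : Type*} [MeasurableSpace Ω] (P : Measure Ω) [IsProbabilityMeasure P]
    (Z : ℕ → Ω → ℝ) (σ2 : ℕ → ℝ)
    (hmeas : ∀ i, Measurable (Z i))
    (hindep : iIndepFun Z P)
    (hL2 : ∀ i, MemLp (Z i) 2 P)
    (hmean : ∀ i, ∫ ω, Z i ω ∂P = 0)
    (hvar : ∀ i, ∫ ω, (Z i ω) ^ 2 ∂P = σ2 i)
    (hpos : ∀ i, 0 < σ2 i)
    (hLind : ∀ ε > (0 : ℝ), Tendsto (fun n =>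
      (∑ i ∈ Finset.range n, σ2 i)⁻¹ *
        ∑ i ∈ Finset.range n,
          ∫ ω in {ω | ε * Real.sqrt (∑ j ∈ Finset.range n, σ2 j) ≤ |Z i ω|}, (Z i ω) ^ 2 ∂P)
      atTop (nhds 0)) :
    ∀ ε > (0 : ℝ), Tendsto (fun n =>
      P {ω | ε ≤ |∑ i ∈ Finset.range n, (Wtrunc Z σ2 n i ω - ∫ ω', Wtrunc Z σ2 n i ω' ∂P)|})
      atTop (nhds 0) :=
  truncated_centered_sum_negligible_general P Z σ2 hindep hL2 hvar hLind
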